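/- (Mean-field bound for parallel retrieval in the HHM.) For every p ≥ 1, β > 0, σ ∈ (1/2,1), fields h ∈ ℝ^p and all m_1, m_2 ∈ [−1,1]^p, the thermodynamic-limit quenched free energy satisfies f(β,h,σ,p) ≥ log 2 + (1/2)·2^{−p} Σ_{ξ∈{−1,1}^p} log cosh(β Σ_{μ=1}^p (h_μ + C_{2σ−1} m_{1,μ}) ξ_μ) + (1/2)·2^{−p} Σ_{ξ∈{−1,1}^p} log cosh(β Σ_{μ=1}^p (h_μ + C_{2σ−1} m_{2,μ}) ξ_μ) − (β C_{2σ−1}/2) Σ_{μ=1}^p (m_{1,μ}² + m_{2,μ}²)/2. -/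

import Mathlib

open Real Filter

/-- The ±1 value of a Boolean spin. -/
noncomputable def spin (b : Bool) : ℝ := if b then 1 else -1

/-- Embedding of the first half of the sites. -/
def finLeft {k : ℕ} (i : Fin (2 ^ k)) : Fin (2 ^ (k + 1)) :=
  ⟨i.1, lt_of_lt_of_le i.2 (Nat.pow_le_pow_right (by norm_num) (Nat.le_succ k))⟩

/-- Embedding of the second half of the sites. -/
def finRight {k : ℕ} (i : Fin (2 ^ k)) : Fin (2 ^ (k + 1)) :=
  ⟨i.1 + 2 ^ k, by
    have h2 : 2 ^ (k + 1) = 2 ^ k + 2 ^ k := by rw [pow_succ]; ring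
    have := i.2; omega⟩

/-- The hierarchical Hopfield model Hamiltonian, defined recursively; `p` is the number
of patterns, `ξ` the pattern assignment, and the double sum over sites includes `i = j`. -/
noncomputable def hopH (σ : ℝ) (p : ℕ) :
    (k : ℕ) → (Fin (2 ^ k) → Bool) → (Fin p → Fin (2 ^ k) → Bool) → ℝ
  | 0, _, _ => 0
  | (k + 1), S, ξ =>
      hopH σ p k (fun i => S (finLeft i)) (fun μ i => ξ μ (finLeft i)) +
        hopH σ p k (fun i => S (finRight i)) (fun μ i => ξ μ (finRight i)) -
        1 / (2 * (2 : ℝ) ^ (2 * σ * ((k : ℝ) + 1))) *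
          ∑ μ : Fin p, ∑ i : Fin (2 ^ (k + 1)), ∑ j : Fin (2 ^ (k + 1)),
            spin (ξ μ i) * spin (ξ μ j) * spin (S i) * spin (S j)

/-- The quenched free energy of the hierarchical Hopfield model with external fields `h`:
the uniform average over the `2^(p·2^k)` pattern assignments of the log partition function,
divided by the number `2^k` of spins. -/
noncomputable def hopF (β σ : ℝ) (p : ℕ) (h : Fin p → ℝ) (k : ℕ) : ℝ :=
  ((2 : ℝ) ^ k)⁻¹ * (((2 : ℝ) ^ (p * 2 ^ k))⁻¹ *
    ∑ ξ : Fin p → Fin (2 ^ k) → Bool,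
      Real.log (∑ S : Fin (2 ^ k) → Bool,
        Real.exp (-β * hopH σ p k S ξ + β * ∑ μ, h μ * ∑ i, spin (ξ μ i) * spin (S i))))

/-- The constant `C_y = 2^{-y} / (1 - 2^{-y})`. -/
noncomputable def Cconst (y : ℝ) : ℝ := (2 : ℝ) ^ (-y) / (1 - (2 : ℝ) ^ (-y))

/-! Completing the square at every level of the hierarchy, `(X - 2^l m)² ≥ 0` for the overlap `X`
of a block of `2^l` spins, bounds `-H_k` below, uniformly in `S` and `ξ`, by
`c_k (∑_μ m_μ X_μ - 2^(k-1) |m|²)` with `c_k = ∑_{l=1}^k 2^{l(1-2σ)}`. So the Boltzmann weight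
dominates that of independent spins in the effective fields `h + c_k m`, whose partition function
is a product of `2 cosh`; averaging over the patterns gives `f_k ≥ B(c_k, m)` (`meanFieldBound`),
and since `c_k → C_{2σ-1}` for `σ > 1/2`, also `f ≥ B(C_{2σ-1}, m)` for every `m`. The parallel
bound is the mean of these bounds at `m1` and `m2`.
-/

open Finset

lemma sum_fin_two_pow_succ {M : Type*} [AddCommMonoid M] {k : ℕ} (f : Fin (2 ^ (k + 1)) → M) :
    ∑ j, f j = ∑ i, f (finLeft i) + ∑ i, f (finRight i) := by
  rw [← Fintype.sum_equiv (finCongr (by ring : 2 ^ k + 2 ^ k = 2 ^ (k + 1))) _ f fun _ => rfl,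
    Fin.sum_univ_add]
  congr 1
  refine sum_congr rfl fun i _ => congrArg f (Fin.ext ?_)
  simp [finRight]

lemma sum_exp_sum_mul_spin {ι : Type*} [Fintype ι] [DecidableEq ι] (a : ι → ℝ) :
    ∑ S : ι → Bool, exp (∑ i, a i * spin (S i)) = ∏ i, 2 * cosh (a i) := by
  have two_mul_cosh : ∀ x, 2 * cosh x = ∑ b : Bool, exp (x * spin b) := fun x => by
    simp [spin, cosh_eq]; ring
  simp_rw [two_mul_cosh, Fintype.prod_sum, exp_sum]

lemma sum_log_two_mul_cosh_sub_le_log_sum_exp {ι : Type*} [Fintype ι] [DecidableEq ι]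
    (a : ι → ℝ) (Q : ℝ) (E : (ι → Bool) → ℝ) (hE : ∀ S, ∑ i, a i * spin (S i) - Q ≤ E S) :
    ∑ i, log (2 * cosh (a i)) - Q ≤ log (∑ S, exp (E S)) := by
  have hcosh : ∀ i, 2 * cosh (a i) ≠ 0 := fun i => by positivity
  calc ∑ i, log (2 * cosh (a i)) - Q = log (∑ S, exp (∑ i, a i * spin (S i) - Q)) := by
        simp_rw [exp_sub, ← sum_div, sum_exp_sum_mul_spin,
          log_div (prod_ne_zero_iff.2 fun i _ => hcosh i) (exp_ne_zero _), log_exp,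
          log_prod fun i _ => hcosh i]
    _ ≤ _ := log_le_log (by positivity) (sum_le_sum fun S _ => exp_le_exp.2 (hE S))

lemma card_inv_mul_sum_apply_apply {ι κ α : Type*} [Fintype ι] [Fintype κ] [Fintype α]
    [DecidableEq ι] [DecidableEq κ] (G : (ι → α) → ℝ) (j : κ) :
    ((Fintype.card α : ℝ) ^ (Fintype.card ι * Fintype.card κ))⁻¹ *
        ∑ ξ : ι → κ → α, G (fun μ => ξ μ j) =
      ((Fintype.card α : ℝ) ^ Fintype.card ι)⁻¹ * ∑ η, G η := by
  have hmarginal : ∑ ξ : ι → κ → α, G (fun μ => ξ μ j) =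
      Fintype.card (ι → α) ^ (Fintype.card κ - 1) • ∑ η, G η := by
    refine (Fintype.sum_equiv (Equiv.piComm fun (_ : ι) (_ : κ) => α) _ (fun g => G (g j))
      fun _ => rfl).trans ?_
    simpa using Fintype.sum_piFinset_apply G (univ : Finset (ι → α)) j
  have : Nonempty κ := ⟨j⟩
  obtain ⟨n, hn⟩ : ∃ n, Fintype.card κ = n + 1 :=
    ⟨_, (Nat.succ_pred_eq_of_pos Fintype.card_pos).symm⟩
  rw [hmarginal, hn, Nat.add_sub_cancel, nsmul_eq_mul, pow_mul, Fintype.card_fun, ← mul_assoc]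
  congr 1
  push_cast
  rcases eq_or_ne ((Fintype.card α : ℝ) ^ Fintype.card ι) 0 with h0 | h0
  · simp [h0]
  · field_simp
    ring

noncomputable def overlap {ι : Type*} [Fintype ι] {p : ℕ} (ξ : Fin p → ι → Bool)
    (S : ι → Bool) (μ : Fin p) : ℝ :=
  ∑ i, spin (ξ μ i) * spin (S i)

lemma sum_sum_mul_spin_mul_spin {ι : Type*} [Fintype ι] {p : ℕ} (b : Fin p → ℝ)
    (ξ : Fin p → ι → Bool) (S : ι → Bool) :
    ∑ i, (∑ μ, b μ * spin (ξ μ i)) * spin (S i) = ∑ μ, b μ * overlap ξ S μ := by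
  simp only [overlap, sum_mul, mul_sum, mul_assoc]
  exact sum_comm

section Hierarchy

variable {p k : ℕ} (ξ : Fin p → Fin (2 ^ (k + 1)) → Bool) (S : Fin (2 ^ (k + 1)) → Bool)

lemma overlap_succ (μ : Fin p) :
    overlap ξ S μ = overlap (fun ν i => ξ ν (finLeft i)) (fun i => S (finLeft i)) μ +
      overlap (fun ν i => ξ ν (finRight i)) (fun i => S (finRight i)) μ :=
  sum_fin_two_pow_succ _

lemma hopH_succ (σ : ℝ) :
    hopH σ p (k + 1) S ξ =
      hopH σ p k (fun i => S (finLeft i)) (fun μ i => ξ μ (finLeft i)) +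
        hopH σ p k (fun i => S (finRight i)) (fun μ i => ξ μ (finRight i)) -
        (2 * (2 : ℝ) ^ (2 * σ * ((k : ℝ) + 1)))⁻¹ * ∑ μ, overlap ξ S μ ^ 2 := by
  have hsq : ∀ μ, ∑ i, ∑ j, spin (ξ μ i) * spin (ξ μ j) * spin (S i) * spin (S j) =
      overlap ξ S μ ^ 2 := fun μ => by
    rw [overlap, sq, sum_mul_sum]
    exact sum_congr rfl fun i _ => sum_congr rfl fun j _ => by ring
  rw [hopH, one_div]
  simp_rw [hsq]

end Hierarchy

noncomputable def couplingSum (σ : ℝ) (k : ℕ) : ℝ :=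
  ∑ l ∈ range k, ((2 : ℝ) ^ (1 - 2 * σ)) ^ (l + 1)

lemma rpow_one_sub_two_mul_pow (σ : ℝ) (k : ℕ) :
    ((2 : ℝ) ^ (1 - 2 * σ)) ^ (k + 1) = 2 ^ (k + 1) / (2 : ℝ) ^ (2 * σ * ((k : ℝ) + 1)) := by
  rw [← rpow_natCast, ← rpow_mul zero_le_two, ← rpow_natCast, ← rpow_sub two_pos]
  push_cast
  ring_nf

lemma couplingSum_mul_le_neg_hopH (σ : ℝ) {p : ℕ} (m : Fin p → ℝ) (k : ℕ)
    (S : Fin (2 ^ k) → Bool) (ξ : Fin p → Fin (2 ^ k) → Bool) :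
    couplingSum σ k * (∑ μ, m μ * overlap ξ S μ - 2 ^ k / 2 * ∑ μ, m μ ^ 2) ≤
      -hopH σ p k S ξ := by
  induction k with
  | zero => simp [couplingSum, hopH]
  | succ k ih =>
    set T : ℝ := (2 : ℝ) ^ (2 * σ * ((k : ℝ) + 1))
    have hT : 0 < T := rpow_pos_of_pos two_pos _
    set d := ((2 : ℝ) ^ (1 - 2 * σ)) ^ (k + 1)
    have hd : d = 2 ^ (k + 1) / T := rpow_one_sub_two_mul_pow σ k
    have hsucc : couplingSum σ (k + 1) = couplingSum σ k + d := sum_range_succ _ _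
    have hlayer : ∀ μ,
        d * (m μ * overlap ξ S μ - 2 ^ k * m μ ^ 2) ≤ (2 * T)⁻¹ * overlap ξ S μ ^ 2 := fun μ => by
      rw [hd, pow_succ]
      field_simp
      nlinarith [sq_nonneg (overlap ξ S μ - 2 ^ k * 2 * m μ)]
    have hsplit : ∑ μ, m μ * overlap ξ S μ =
        ∑ μ, m μ * overlap (fun ν i => ξ ν (finLeft i)) (fun i => S (finLeft i)) μ +
          ∑ μ, m μ * overlap (fun ν i => ξ ν (finRight i)) (fun i => S (finRight i)) μ := by
      simp only [overlap_succ ξ S, mul_add, sum_add_distrib]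
    have hlayers := sum_le_sum fun μ (_ : μ ∈ univ) => hlayer μ
    rw [← mul_sum, ← mul_sum, sum_sub_distrib, ← mul_sum, hsplit] at hlayers
    rw [hopH_succ, hsucc, hsplit, pow_succ]
    linarith [hlayers, ih (fun i => S (finLeft i)) (fun μ i => ξ μ (finLeft i)),
      ih (fun i => S (finRight i)) (fun μ i => ξ μ (finRight i))]

lemma meanField_le_log_partition {β : ℝ} (hβ : 0 ≤ β) (σ : ℝ) {p : ℕ} (h m : Fin p → ℝ) (k : ℕ)
    (ξ : Fin p → Fin (2 ^ k) → Bool) :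
    2 ^ k * log 2 + ∑ i, log (cosh (β * ∑ μ, (h μ + couplingSum σ k * m μ) * spin (ξ μ i))) -
        β * (couplingSum σ k * (2 ^ k / 2 * ∑ μ, m μ ^ 2)) ≤
      log (∑ S : Fin (2 ^ k) → Bool,
        exp (-β * hopH σ p k S ξ + β * ∑ μ, h μ * overlap ξ S μ)) := by
  set c := couplingSum σ k
  have hexponent : ∀ S : Fin (2 ^ k) → Bool,
      ∑ i, (β * ∑ μ, (h μ + c * m μ) * spin (ξ μ i)) * spin (S i) -
          β * (c * (2 ^ k / 2 * ∑ μ, m μ ^ 2)) ≤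
        -β * hopH σ p k S ξ + β * ∑ μ, h μ * overlap ξ S μ := fun S => by
    have hH := mul_le_mul_of_nonneg_left (couplingSum_mul_le_neg_hopH σ m k S ξ) hβ
    simp_rw [mul_assoc β, ← mul_sum, sum_sum_mul_spin_mul_spin, add_mul, sum_add_distrib,
      mul_assoc c, ← mul_sum]
    linear_combination hH
  calc
    _ = ∑ i, log (2 * cosh (β * ∑ μ, (h μ + c * m μ) * spin (ξ μ i))) -
        β * (c * (2 ^ k / 2 * ∑ μ, m μ ^ 2)) := by
      simp [log_mul two_ne_zero (cosh_pos _).ne', sum_add_distrib]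
    _ ≤ _ := sum_log_two_mul_cosh_sub_le_log_sum_exp _ _ _ hexponent

noncomputable def meanFieldBound (β : ℝ) {p : ℕ} (h m : Fin p → ℝ) (c : ℝ) : ℝ :=
  log 2 + ((2 : ℝ) ^ p)⁻¹ *
      ∑ η : Fin p → Bool, log (cosh (β * ∑ μ, (h μ + c * m μ) * spin (η μ))) -
    β * c / 2 * ∑ μ, m μ ^ 2

lemma meanFieldBound_couplingSum_le_hopF {β : ℝ} (hβ : 0 ≤ β) (σ : ℝ) {p : ℕ}
    (h m : Fin p → ℝ) (k : ℕ) :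
    meanFieldBound β h m (couplingSum σ k) ≤ hopF β σ p h k := by
  set c := couplingSum σ k
  set g : (Fin p → Bool) → ℝ := fun η => log (cosh (β * ∑ μ, (h μ + c * m μ) * spin (η μ)))
  have hmarginal : ∀ i : Fin (2 ^ k), ((2 : ℝ) ^ (p * 2 ^ k))⁻¹ *
      ∑ ξ : Fin p → Fin (2 ^ k) → Bool, g (fun μ => ξ μ i) = ((2 : ℝ) ^ p)⁻¹ * ∑ η, g η := by
    simpa using card_inv_mul_sum_apply_apply (κ := Fin (2 ^ k)) g
  have hsites : ((2 : ℝ) ^ (p * 2 ^ k))⁻¹ * ∑ ξ : Fin p → Fin (2 ^ k) → Bool,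
      ∑ i, g (fun μ => ξ μ i) = 2 ^ k * (((2 : ℝ) ^ p)⁻¹ * ∑ η, g η) := by
    rw [sum_comm, mul_sum, sum_congr rfl fun i _ => hmarginal i, sum_const, card_univ,
      Fintype.card_fin, nsmul_eq_mul, Nat.cast_pow, Nat.cast_ofNat]
  have hcard : ((2 : ℝ) ^ (p * 2 ^ k))⁻¹ * ∑ _ξ : Fin p → Fin (2 ^ k) → Bool, (1 : ℝ) = 1 := by
    simp [← pow_mul, mul_comm]
  calc
    _ = ((2 : ℝ) ^ k)⁻¹ * (((2 : ℝ) ^ (p * 2 ^ k))⁻¹ * ∑ ξ : Fin p → Fin (2 ^ k) → Bool,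
          (2 ^ k * log 2 + ∑ i, g (fun μ => ξ μ i) - β * (c * (2 ^ k / 2 * ∑ μ, m μ ^ 2)))) := by
      have hregroup : ∀ ξ : Fin p → Fin (2 ^ k) → Bool,
          2 ^ k * log 2 + ∑ i, g (fun μ => ξ μ i) - β * (c * (2 ^ k / 2 * ∑ μ, m μ ^ 2)) =
            (2 ^ k * log 2 - β * (c * (2 ^ k / 2 * ∑ μ, m μ ^ 2))) * 1 +
              ∑ i, g (fun μ => ξ μ i) := fun ξ => by ring
      simp_rw [hregroup]
      rw [sum_add_distrib, ← mul_sum, mul_add, mul_left_comm, hcard, hsites, meanFieldBound]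
      field_simp
      ring
    _ ≤ hopF β σ p h k := by
      unfold hopF
      gcongr with ξ
      exact meanField_le_log_partition hβ σ h m k ξ

lemma tendsto_couplingSum {σ : ℝ} (hσ : 1 / 2 < σ) :
    Tendsto (couplingSum σ) atTop (nhds (Cconst (2 * σ - 1))) := by
  set r : ℝ := (2 : ℝ) ^ (1 - 2 * σ)
  have hr : r < 1 := rpow_lt_one_of_one_lt_of_neg one_lt_two (by linarith)
  have hC : Cconst (2 * σ - 1) = r * (1 - r)⁻¹ := by
    rw [Cconst, neg_sub, ← div_eq_mul_inv]
  rw [hC]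
  convert ((hasSum_geometric_of_lt_one (by positivity) hr).mul_left r).tendsto_sum_nat using 2
  simp only [couplingSum, pow_succ', r]

lemma continuous_meanFieldBound (β : ℝ) {p : ℕ} (h m : Fin p → ℝ) :
    Continuous (meanFieldBound β h m) := by
  have hlogcosh : Continuous fun x => log (cosh x) :=
    continuous_cosh.log fun x => (cosh_pos x).ne'
  unfold meanFieldBound
  exact (continuous_const.add (continuous_const.mul (continuous_finsetSum _ fun η _ =>
    hlogcosh.comp (by fun_prop)))).sub (by fun_prop)

lemma meanFieldBound_le_of_tendsto {β σ F : ℝ} (hβ : 0 ≤ β) (hσ : 1 / 2 < σ) {p : ℕ}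
    {h : Fin p → ℝ} (hF : Tendsto (hopF β σ p h) atTop (nhds F)) (m : Fin p → ℝ) :
    meanFieldBound β h m (Cconst (2 * σ - 1)) ≤ F :=
  le_of_tendsto_of_tendsto' ((continuous_meanFieldBound β h m).tendsto _ |>.comp
    (tendsto_couplingSum hσ)) hF (meanFieldBound_couplingSum_le_hopF hβ σ h m)

theorem hopfield_mean_field_parallel_bound_general (p : ℕ) (β σ : ℝ) (h : Fin p → ℝ)
    (hβ : 0 < β) (hσ : σ ∈ Set.Ioo (1 / 2 : ℝ) 1) (m1 m2 : Fin p → ℝ) (F : ℝ)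
    (hF : Tendsto (fun k => hopF β σ p h k) atTop (nhds F)) :
    F ≥ Real.log 2 +
        (1 / 2) * (((2 : ℝ) ^ p)⁻¹ *
          ∑ ξ : Fin p → Bool,
            Real.log (Real.cosh (β * ∑ μ, (h μ + Cconst (2 * σ - 1) * m1 μ) * spin (ξ μ)))) +
        (1 / 2) * (((2 : ℝ) ^ p)⁻¹ *
          ∑ ξ : Fin p → Bool,
            Real.log (Real.cosh (β * ∑ μ, (h μ + Cconst (2 * σ - 1) * m2 μ) * spin (ξ μ)))) -
        β * Cconst (2 * σ - 1) / 2 * ∑ μ, ((m1 μ) ^ 2 + (m2 μ) ^ 2) / 2 := by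
  have h1 := meanFieldBound_le_of_tendsto hβ.le hσ.1 hF m1
  have h2 := meanFieldBound_le_of_tendsto hβ.le hσ.1 hF m2
  rw [meanFieldBound] at h1 h2
  rw [← sum_div, sum_add_distrib]
  linarith

/-- mean-field bound for parallel retrieval in the HHM. -/
theorem hopfield_mean_field_parallel_bound (p : ℕ) (hp : 1 ≤ p) (β σ : ℝ) (h : Fin p → ℝ)
    (hβ : 0 < β) (hσ : σ ∈ Set.Ioo (1 / 2 : ℝ) 1) (m1 m2 : Fin p → ℝ)
    (hm1 : ∀ μ, m1 μ ∈ Set.Icc (-1 : ℝ) 1) (hm2 : ∀ μ, m2 μ ∈ Set.Icc (-1 : ℝ) 1) (F : ℝ)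
    (hF : Tendsto (fun k => hopF β σ p h k) atTop (nhds F)) :
    F ≥ Real.log 2 +
        (1 / 2) * (((2 : ℝ) ^ p)⁻¹ *
          ∑ ξ : Fin p → Bool,
            Real.log (Real.cosh (β * ∑ μ, (h μ + Cconst (2 * σ - 1) * m1 μ) * spin (ξ μ)))) +
        (1 / 2) * (((2 : ℝ) ^ p)⁻¹ *
          ∑ ξ : Fin p → Bool,
            Real.log (Real.cosh (β * ∑ μ, (h μ + Cconst (2 * σ - 1) * m2 μ) * spin (ξ μ)))) -
        β * Cconst (2 * σ - 1) / 2 * ∑ μ, ((m1 μ) ^ 2 + (m2 μ) ^ 2) / 2 :=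
  hopfield_mean_field_parallel_bound_general p β σ h hβ hσ m1 m2 F hF
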